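/- Let η ∈ Matrix (Fin n) (Fin n) ℂ and let W : (Fin n → ℂ) × (Fin n → ℂ) → ℂ be infinitely ℂ-differentiable and satisfy Plebański's second heavenly equation (for η). Define vector fields on E = (Fin n → ℂ) × (Fin n → ℂ) by v_i(z,θ) = (0, e_i) and h_i(z,θ) = (e_i, Σ_q (Σ_p η_{p q}·∂_{θ_i}∂_{θ_p}W(z,θ))·e_q). Then for all i, j the Lie brackets vanish: [v_i, v_j] = 0 and [h_i, h_j] = 0. -/

import Mathlib

open scoped BigOperators

/-- Directional derivative along the `i`-th coordinate of the first (`z`) factor. -/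
noncomputable def dz {n : ℕ} (i : Fin n) (f : (Fin n → ℂ) × (Fin n → ℂ) → ℂ) :
    (Fin n → ℂ) × (Fin n → ℂ) → ℂ :=
  fun x => fderiv ℂ f x (Pi.single i 1, 0)

/-- Directional derivative along the `i`-th coordinate of the second (`θ`) factor. -/
noncomputable def dθ {n : ℕ} (i : Fin n) (f : (Fin n → ℂ) × (Fin n → ℂ) → ℂ) :
    (Fin n → ℂ) × (Fin n → ℂ) → ℂ :=
  fun x => fderiv ℂ f x (0, Pi.single i 1)

/-- Plebański's second heavenly equation for the matrix `η`. -/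
def PlebanskiSecond {n : ℕ} (η : Matrix (Fin n) (Fin n) ℂ)
    (W : (Fin n → ℂ) × (Fin n → ℂ) → ℂ) : Prop :=
  ∀ i j x, dθ i (dz j W) x - dθ j (dz i W) x =
    ∑ p, ∑ q, η p q * dθ i (dθ p W) x * dθ j (dθ q W) x

/-!
Write `u = ∂θ∂θ W` for the `θ`-Hessian and `S = η + ηᵀ`. The left side of the heavenly equation
is antisymmetric in `i, j`, so the equation forces `u S u = 0`. Differentiating this in `θ_p`
shows that `∑ S_ab ∂θ_p u_ia u_jb` is antisymmetric in `i, j`; it is also symmetric in `p, i`,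
hence it vanishes. The `θ`-components of `[h_i, h_j]` are `∑_p η_pq (h_i(u_jp) - h_j(u_ip))`,
and the `θ_p`-derivative of the heavenly equation together with the symmetry of third
derivatives reduces `h_i(u_jp) - h_j(u_ip)` to minus that vanishing contraction.
-/

theorem Finset.sum_sum_add_mul_mul {ι R : Type*} [Fintype ι] [CommSemiring R]
    (c d : ι → ι → R) (f g : ι → R) :
    ∑ a, ∑ b, (c a b + d a b) * f a * g b
      = ∑ a, ∑ b, c a b * f a * g b + ∑ a, ∑ b, d a b * f a * g b := by
  simp only [add_mul, Finset.sum_add_distrib]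

theorem eq_zero_of_symm_of_antisymm {ι R : Type*} [NonAssocRing R] [NoZeroDivisors R]
    [CharZero R] {A : ι → ι → ι → R} (hs : ∀ p i j, A p i j = A i p j)
    (ha : ∀ p i j, A p i j = -A p j i) (p i j : ι) : A p i j = 0 := by
  rw [← CharZero.eq_neg_self_iff]
  calc A p i j = -A p j i := ha p i j
    _ = -A j p i := by rw [hs]
    _ = A j i p := by rw [ha, neg_neg]
    _ = A i j p := hs j i p
    _ = -A i p j := ha i j p
    _ = -A p i j := by rw [hs]

section Calculus

variable {𝕜 : Type*} [NontriviallyNormedField 𝕜]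
  {E : Type*} [NormedAddCommGroup E] [NormedSpace 𝕜 E]
  {F : Type*} [NormedAddCommGroup F] [NormedSpace 𝕜 F]

theorem ContDiff.fderiv_apply_const {f : E → F} (hf : ContDiff 𝕜 ⊤ f) (v : E) :
    ContDiff 𝕜 ⊤ (fun x => fderiv 𝕜 f x v) :=
  (hf.fderiv_right le_rfl).clm_apply contDiff_const

theorem ContDiff.fderiv_fderiv_apply_comm {f : E → F} (hf : ContDiff 𝕜 ⊤ f) (v w x : E) :
    fderiv 𝕜 (fun y => fderiv 𝕜 f y v) x w = fderiv 𝕜 (fun y => fderiv 𝕜 f y w) x v := by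
  have hf' : DifferentiableAt 𝕜 (fderiv 𝕜 f) x :=
    (hf.fderiv_right (m := ⊤) le_rfl).differentiable (by simp) x
  rw [fderiv_clm_apply hf' (differentiableAt_const v),
    fderiv_clm_apply hf' (differentiableAt_const w)]
  simpa using hf.contDiffAt.isSymmSndFDerivAt_of_omega w v

theorem fderiv_sum_const_mul_apply {ι : Type*} [Fintype ι] (c : ι → 𝕜) {f : ι → E → 𝕜} {x : E}
    (hf : ∀ i, DifferentiableAt 𝕜 (f i) x) (v : E) :
    fderiv 𝕜 (fun y => ∑ i, c i * f i y) x v = ∑ i, c i * fderiv 𝕜 (f i) x v := by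
  rw [fderiv_fun_sum fun i _ => (hf i).const_mul (c i)]
  simp [fderiv_const_mul (hf _)]

theorem fderiv_sum_sum_mul_apply {ι : Type*} [Fintype ι] (c : ι → ι → 𝕜) {f g : ι → E → 𝕜}
    {x : E} (hf : ∀ i, DifferentiableAt 𝕜 (f i) x) (hg : ∀ i, DifferentiableAt 𝕜 (g i) x)
    (v : E) :
    fderiv 𝕜 (fun y => ∑ a, ∑ b, c a b * f a y * g b y) x v
      = ∑ a, ∑ b, c a b * fderiv 𝕜 (f a) x v * g b x
        + ∑ a, ∑ b, c a b * f a x * fderiv 𝕜 (g b) x v := by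
  have hfg : ∀ a b, DifferentiableAt 𝕜 (fun y => c a b * f a y * g b y) x :=
    fun a b => ((hf a).const_mul _).mul (hg b)
  rw [fderiv_fun_sum fun a _ => DifferentiableAt.fun_sum fun b _ => hfg a b]
  simp only [FunLike.coe_sum, Finset.sum_apply]
  rw [← Finset.sum_add_distrib]
  refine Finset.sum_congr rfl fun a _ => ?_
  rw [fderiv_fun_sum fun b _ => hfg a b]
  simp only [FunLike.coe_sum, Finset.sum_apply, ← Finset.sum_add_distrib]
  refine Finset.sum_congr rfl fun b _ => ?_
  simp [fderiv_fun_mul ((hf a).const_mul _) (hg b), fderiv_const_mul (hf a)]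
  ring

theorem ContinuousLinearMap.apply_prodMk_eq_add_sum {E₁ : Type*} [NormedAddCommGroup E₁]
    [NormedSpace 𝕜 E₁] {ι : Type*} [Fintype ι] [DecidableEq ι] (L : E₁ × (ι → 𝕜) →L[𝕜] F)
    (a : E₁) (b : ι → 𝕜) :
    L (a, b) = L (a, 0) + ∑ r, b r • L (0, Pi.single r 1) := by
  have hb : ((0 : E₁), b) = ∑ r, b r • ((0 : E₁), (Pi.single r 1 : ι → 𝕜)) := by
    ext <;> simp [Prod.fst_sum, Prod.snd_sum, Pi.single_apply]
  have hab : (a, b) = (a, (0 : ι → 𝕜)) + ((0 : E₁), b) := by simp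
  rw [hab, map_add, hb, map_sum]
  simp only [map_smul]

theorem VectorField.lieBracket_prodMk_of_const_fst {E₁ : Type*} [NormedAddCommGroup E₁]
    [NormedSpace 𝕜 E₁] (c d : E₁) {V W : E₁ × F → F} {x : E₁ × F}
    (hV : DifferentiableAt 𝕜 V x) (hW : DifferentiableAt 𝕜 W x) :
    lieBracket 𝕜 (fun y => (c, V y)) (fun y => (d, W y)) x
      = (0, fderiv 𝕜 W x (c, V x) - fderiv 𝕜 V x (d, W x)) := by
  rw [lieBracket_eq]
  dsimp only
  rw [((hasFDerivAt_const c x).prodMk hV.hasFDerivAt).fderiv,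
    ((hasFDerivAt_const d x).prodMk hW.hasFDerivAt).fderiv]
  simp

end Calculus

section Plebanski

variable {n : ℕ}

theorem ContDiff.dθ {f : (Fin n → ℂ) × (Fin n → ℂ) → ℂ} (hf : ContDiff ℂ ⊤ f) (i : Fin n) :
    ContDiff ℂ ⊤ (dθ i f) :=
  hf.fderiv_apply_const _

theorem ContDiff.dz {f : (Fin n → ℂ) × (Fin n → ℂ) → ℂ} (hf : ContDiff ℂ ⊤ f) (i : Fin n) :
    ContDiff ℂ ⊤ (dz i f) :=
  hf.fderiv_apply_const _

theorem differentiable_dθ_dθ {f : (Fin n → ℂ) × (Fin n → ℂ) → ℂ} (hf : ContDiff ℂ ⊤ f)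
    (k a : Fin n) : Differentiable ℂ (dθ k (dθ a f)) :=
  ((hf.dθ a).dθ k).differentiable (by simp)

theorem dθ_comm {f : (Fin n → ℂ) × (Fin n → ℂ) → ℂ} (hf : ContDiff ℂ ⊤ f) (a b : Fin n) :
    dθ a (dθ b f) = dθ b (dθ a f) :=
  funext (hf.fderiv_fderiv_apply_comm _ _)

theorem dz_dθ_comm {f : (Fin n → ℂ) × (Fin n → ℂ) → ℂ} (hf : ContDiff ℂ ⊤ f) (a b : Fin n) :
    dz a (dθ b f) = dθ b (dz a f) :=
  funext (hf.fderiv_fderiv_apply_comm _ _)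

theorem dθ_dθ_dθ_comm {f : (Fin n → ℂ) × (Fin n → ℂ) → ℂ} (hf : ContDiff ℂ ⊤ f)
    (a b c : Fin n) : dθ a (dθ b (dθ c f)) = dθ c (dθ b (dθ a f)) := by
  rw [dθ_comm (hf.dθ c) a b, dθ_comm hf a c, dθ_comm (hf.dθ a) b c]

theorem dz_dθ_dθ_eq {f : (Fin n → ℂ) × (Fin n → ℂ) → ℂ} (hf : ContDiff ℂ ⊤ f) (i j p : Fin n) :
    dz i (dθ j (dθ p f)) = dθ p (dθ j (dz i f)) := by
  rw [dz_dθ_comm (hf.dθ p), dz_dθ_comm hf, dθ_comm (hf.dz i)]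

theorem fderiv_apply_single_prodMk (f : (Fin n → ℂ) × (Fin n → ℂ) → ℂ)
    (x : (Fin n → ℂ) × (Fin n → ℂ)) (i : Fin n) (b : Fin n → ℂ) :
    fderiv ℂ f x (Pi.single i 1, b) = dz i f x + ∑ r, b r * dθ r f x :=
  (fderiv ℂ f x).apply_prodMk_eq_add_sum _ _

noncomputable def plebanskiField (η : Matrix (Fin n) (Fin n) ℂ)
    (W : (Fin n → ℂ) × (Fin n → ℂ) → ℂ) (i : Fin n) (x : (Fin n → ℂ) × (Fin n → ℂ)) :
    (Fin n → ℂ) × (Fin n → ℂ) :=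
  (Pi.single i 1, fun q => ∑ p, η p q * dθ i (dθ p W) x)

namespace PlebanskiSecond

variable {η : Matrix (Fin n) (Fin n) ℂ} {W : (Fin n → ℂ) × (Fin n → ℂ) → ℂ}

theorem sum_add_transpose_mul_eq_zero (hP : PlebanskiSecond η W) (i j : Fin n)
    (x : (Fin n → ℂ) × (Fin n → ℂ)) :
    ∑ a, ∑ b, (η a b + η b a) * dθ i (dθ a W) x * dθ j (dθ b W) x = 0 := by
  have hswap : ∑ a, ∑ b, η a b * dθ j (dθ a W) x * dθ i (dθ b W) x
      = ∑ a, ∑ b, η b a * dθ i (dθ a W) x * dθ j (dθ b W) x := by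
    rw [Finset.sum_comm]
    exact Finset.sum_congr rfl fun a _ => Finset.sum_congr rfl fun b _ => by ring
  calc ∑ a, ∑ b, (η a b + η b a) * dθ i (dθ a W) x * dθ j (dθ b W) x
      = ∑ a, ∑ b, η a b * dθ i (dθ a W) x * dθ j (dθ b W) x
        + ∑ a, ∑ b, η b a * dθ i (dθ a W) x * dθ j (dθ b W) x :=
        Finset.sum_sum_add_mul_mul _ _ _ _
    _ = 0 := by rw [← hP i j, ← hswap, ← hP j i]; ring

theorem dθ_sub_dθ_eq (hW : ContDiff ℂ ⊤ W) (hP : PlebanskiSecond η W) (p i j : Fin n)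
    (x : (Fin n → ℂ) × (Fin n → ℂ)) :
    dθ p (dθ i (dz j W)) x - dθ p (dθ j (dz i W)) x
      = ∑ a, ∑ b, η a b * dθ p (dθ i (dθ a W)) x * dθ j (dθ b W) x
        + ∑ a, ∑ b, η a b * dθ i (dθ a W) x * dθ p (dθ j (dθ b W)) x := by
  have hd' : ∀ k a, DifferentiableAt ℂ (dθ k (dz a W)) x :=
    fun k a => ((hW.dz a).dθ k).differentiable (by simp) x
  have h := congrArg (fun φ => fderiv ℂ φ x (0, Pi.single p 1)) (funext (hP i j))
  beta_reduce at h
  rw [fderiv_fun_sub (hd' i j) (hd' j i),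
    fderiv_sum_sum_mul_apply η (differentiable_dθ_dθ hW i · x) (differentiable_dθ_dθ hW j · x)] at h
  exact h

theorem sum_add_transpose_mul_dθ_eq_zero (hW : ContDiff ℂ ⊤ W) (hP : PlebanskiSecond η W)
    (p i j : Fin n) (x : (Fin n → ℂ) × (Fin n → ℂ)) :
    ∑ a, ∑ b, (η a b + η b a) * dθ p (dθ i (dθ a W)) x * dθ j (dθ b W) x = 0 := by
  refine eq_zero_of_symm_of_antisymm
    (A := fun p i j => ∑ a, ∑ b, (η a b + η b a) * dθ p (dθ i (dθ a W)) x * dθ j (dθ b W) x)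
    (fun p i j => ?_) (fun p i j => ?_) p i j
  · have hT : ∀ a, dθ p (dθ i (dθ a W)) = dθ i (dθ p (dθ a W)) := fun a => dθ_comm (hW.dθ a) p i
    simp only [hT]
  · have h := congrArg (fun φ => fderiv ℂ φ x (0, Pi.single p 1))
      (funext (hP.sum_add_transpose_mul_eq_zero i j))
    beta_reduce at h
    rw [fderiv_sum_sum_mul_apply _ (differentiable_dθ_dθ hW i · x)
      (differentiable_dθ_dθ hW j · x), fderiv_const_apply] at h
    have hswap : ∑ a, ∑ b, (η a b + η b a) * dθ i (dθ a W) x * dθ p (dθ j (dθ b W)) x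
        = ∑ a, ∑ b, (η a b + η b a) * dθ p (dθ j (dθ a W)) x * dθ i (dθ b W) x := by
      rw [Finset.sum_comm]
      exact Finset.sum_congr rfl fun a _ => Finset.sum_congr rfl fun b _ => by ring
    rw [eq_neg_iff_add_eq_zero, ← hswap]
    exact h

theorem fderiv_dθ_dθ_plebanskiField_comm (hW : ContDiff ℂ ⊤ W) (hP : PlebanskiSecond η W)
    (i j p : Fin n) (x : (Fin n → ℂ) × (Fin n → ℂ)) :
    fderiv ℂ (dθ j (dθ p W)) x (plebanskiField η W i x)
      = fderiv ℂ (dθ i (dθ p W)) x (plebanskiField η W j x) := by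
  rw [plebanskiField, plebanskiField, fderiv_apply_single_prodMk, fderiv_apply_single_prodMk,
    dz_dθ_dθ_eq hW, dz_dθ_dθ_eq hW]
  have hPp := hP.dθ_sub_dθ_eq hW p i j x
  have hQ := hP.sum_add_transpose_mul_dθ_eq_zero hW p i j x
  rw [Finset.sum_sum_add_mul_mul η (fun a b => η b a)] at hQ
  have hC : ∑ r, (∑ a, η a r * dθ i (dθ a W) x) * dθ r (dθ j (dθ p W)) x
      = ∑ a, ∑ b, η a b * dθ i (dθ a W) x * dθ p (dθ j (dθ b W)) x := by
    simp only [Finset.sum_mul, dθ_dθ_dθ_comm hW _ j p]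
    exact Finset.sum_comm
  have hD : ∑ r, (∑ a, η a r * dθ j (dθ a W) x) * dθ r (dθ i (dθ p W)) x
      = ∑ a, ∑ b, η b a * dθ p (dθ i (dθ a W)) x * dθ j (dθ b W) x := by
    simp only [Finset.sum_mul, dθ_dθ_dθ_comm hW _ i p]
    exact Finset.sum_congr rfl fun a _ => Finset.sum_congr rfl fun b _ => by ring
  linear_combination hC - hD - hPp - hQ

theorem lieBracket_plebanskiField (hW : ContDiff ℂ ⊤ W) (hP : PlebanskiSecond η W)
    (i j : Fin n) :
    VectorField.lieBracket ℂ (plebanskiField η W i) (plebanskiField η W j) = 0 := by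
  funext x
  have hG : ∀ k q, DifferentiableAt ℂ (fun y => ∑ p, η p q * dθ k (dθ p W) y) x :=
    fun k q => DifferentiableAt.fun_sum fun p _ => (differentiable_dθ_dθ hW k p x).const_mul _
  unfold plebanskiField
  rw [VectorField.lieBracket_prodMk_of_const_fst _ _
    (differentiableAt_pi.2 (hG i)) (differentiableAt_pi.2 (hG j)), fderiv_pi (hG i),
    fderiv_pi (hG j)]
  refine Prod.ext rfl (funext fun q => ?_)
  simp only [Pi.sub_apply, ContinuousLinearMap.pi_apply, Pi.zero_apply, Prod.snd_zero]
  rw [fderiv_sum_const_mul_apply _ (differentiable_dθ_dθ hW j · x),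
    fderiv_sum_const_mul_apply _ (differentiable_dθ_dθ hW i · x), sub_eq_zero]
  exact Finset.sum_congr rfl fun p _ =>
    congrArg (η p q * ·) (hP.fderiv_dθ_dθ_plebanskiField_comm hW i j p x)

end PlebanskiSecond

end Plebanski

/-- If `W` is smooth and satisfies Plebański's second heavenly equation for `η`,
then the vector fields `v_i(z,θ) = (0, e_i)` and
`h_i(z,θ) = (e_i, Σ_q (Σ_p η p q · ∂_{θ_i}∂_{θ_p}W(z,θ))·e_q)` satisfy
`[v_i, v_j] = 0` and `[h_i, h_j] = 0` for all `i, j`. -/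
theorem stmt_11 {n : ℕ} (η : Matrix (Fin n) (Fin n) ℂ)
    (W : (Fin n → ℂ) × (Fin n → ℂ) → ℂ)
    (hW : ContDiff ℂ ⊤ W)
    (hP : PlebanskiSecond η W)
    (v h : Fin n → ((Fin n → ℂ) × (Fin n → ℂ)) → ((Fin n → ℂ) × (Fin n → ℂ)))
    (hv : ∀ i x, v i x = (0, Pi.single i 1))
    (hh : ∀ i x, h i x = (Pi.single i 1, fun q => ∑ p, η p q * dθ i (dθ p W) x)) :
    ∀ i j, VectorField.lieBracket ℂ (v i) (v j) = 0 ∧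
      VectorField.lieBracket ℂ (h i) (h j) = 0 := by
  intro i j
  have hv' : ∀ k, v k = fun _ => (0, Pi.single k 1) := fun k => funext (hv k)
  have hh' : ∀ k, h k = plebanskiField η W k := fun k => funext (hh k)
  refine ⟨?_, by rw [hh', hh']; exact hP.lieBracket_plebanskiField hW i j⟩
  funext x
  simp [VectorField.lieBracket_eq, hv']
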